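/- Let A_1, …, A_N be real n×n matrices and consider the linear switched system with vector fields f_i(x) = A_i x. Suppose B ⊆ ℝⁿ is a compact absorbing set for the switched system with the origin in the interior of B. Then the origin is stable under arbitrary switching: for every ε > 0 there exists δ > 0 such that every solution x of the switched system with ‖x(0)‖₂ < δ satisfies ‖x(t)‖₂ < ε for all t ≥ 0. -/

import Mathlib

/-!
Say `B` contains the ball of radius `r` and lies in the closed ball of radius `R` about the
origin. Solutions of a linear switched system are closed under scaling, so a solution with
`‖x 0‖ < r / c`, scaled by `c`, starts and hence stays in `B`; thus `‖x t‖ ≤ R / c`, which is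
small once `c` is large.
-/

/-- A solution of the linear switched system determined by the matrices `A i`:
a function differentiable on `[0,∞)` whose derivative at each `t ≥ 0` is `A i (x t)`
for some index `i` (arbitrary switching). -/
def IsSwitchedSolution {n N : ℕ} (A : Fin N → Matrix (Fin n) (Fin n) ℝ)
    (x : ℝ → EuclideanSpace ℝ (Fin n)) : Prop :=
  ∀ t : ℝ, 0 ≤ t → ∃ i : Fin N,
    HasDerivWithinAt x (WithLp.toLp 2 ((A i).mulVec (x t))) (Set.Ici 0) t

/-- `M` is positively invariant for the linear switched system. -/
def PositivelyInvariant {n N : ℕ} (A : Fin N → Matrix (Fin n) (Fin n) ℝ)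
    (M : Set (EuclideanSpace ℝ (Fin n))) : Prop :=
  ∀ x : ℝ → EuclideanSpace ℝ (Fin n), IsSwitchedSolution A x →
    x 0 ∈ M → ∀ t : ℝ, 0 ≤ t → x t ∈ M

/-- `M` is an absorbing set for the linear switched system. -/
def AbsorbingSet {n N : ℕ} (A : Fin N → Matrix (Fin n) (Fin n) ℝ)
    (M : Set (EuclideanSpace ℝ (Fin n))) : Prop :=
  PositivelyInvariant A M ∧
    ∀ C : Set (EuclideanSpace ℝ (Fin n)), IsCompact C →
      ∃ tC : ℝ, 0 ≤ tC ∧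
        ∀ x : ℝ → EuclideanSpace ℝ (Fin n), IsSwitchedSolution A x →
          x 0 ∈ C → ∀ t : ℝ, tC ≤ t → x t ∈ M

open Metric Topology

section

variable {n N : ℕ} {A : Fin N → Matrix (Fin n) (Fin n) ℝ}

theorem IsSwitchedSolution.const_smul {x : ℝ → EuclideanSpace ℝ (Fin n)}
    (hx : IsSwitchedSolution A x) (c : ℝ) : IsSwitchedSolution A (c • x) := by
  intro t ht
  obtain ⟨i, hi⟩ := hx t ht
  refine ⟨i, ?_⟩
  simpa only [Pi.smul_apply, WithLp.ofLp_smul, Matrix.mulVec_smul, WithLp.toLp_smul] using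
    hi.const_smul c

theorem PositivelyInvariant.origin_stable {M : Set (EuclideanSpace ℝ (Fin n))}
    (hM : PositivelyInvariant A M) (hbdd : Bornology.IsBounded M) (h0 : M ∈ 𝓝 0) :
    ∀ ε : ℝ, 0 < ε → ∃ δ : ℝ, 0 < δ ∧
      ∀ x : ℝ → EuclideanSpace ℝ (Fin n), IsSwitchedSolution A x →
        ‖x 0‖ < δ → ∀ t : ℝ, 0 ≤ t → ‖x t‖ < ε := by
  obtain ⟨r, hr, hball⟩ := Metric.mem_nhds_iff.mp h0
  obtain ⟨R, hR, hclosedBall⟩ := hbdd.subset_closedBall_lt 0 0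
  intro ε hε
  set c : ℝ := 2 * R / ε
  have hc : 0 < c := by positivity
  refine ⟨r / c, by positivity, fun x hx hx0 t ht => ?_⟩
  have hnorm (s : ℝ) : ‖c • x s‖ = c * ‖x s‖ := by rw [norm_smul, Real.norm_of_nonneg hc.le]
  have hstart : c • x 0 ∈ M := hball <| by
    rw [mem_ball_zero_iff, hnorm]
    exact (lt_div_iff₀' hc).mp hx0
  have hbound : c * ‖x t‖ ≤ R := by
    simpa only [mem_closedBall_zero_iff, Pi.smul_apply, hnorm] using
      hclosedBall (hM _ (hx.const_smul c) hstart t ht)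
  calc ‖x t‖ ≤ R / c := (le_div_iff₀' hc).mpr hbound
    _ = ε / 2 := by simp only [c]; field_simp
    _ < ε := half_lt_self hε

end

/-- If a linear switched system has a compact absorbing set `B` with `0` in its
interior, then the origin is stable under arbitrary switching. -/
theorem origin_stable_of_absorbing {n N : ℕ} (A : Fin N → Matrix (Fin n) (Fin n) ℝ)
    (B : Set (EuclideanSpace ℝ (Fin n))) (hB : IsCompact B)
    (h0 : (0 : EuclideanSpace ℝ (Fin n)) ∈ interior B)
    (habs : AbsorbingSet A B) :
    ∀ ε : ℝ, 0 < ε → ∃ δ : ℝ, 0 < δ ∧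
      ∀ x : ℝ → EuclideanSpace ℝ (Fin n), IsSwitchedSolution A x →
        ‖x 0‖ < δ → ∀ t : ℝ, 0 ≤ t → ‖x t‖ < ε :=
  PositivelyInvariant.origin_stable habs.1 hB.isBounded (mem_interior_iff_mem_nhds.mp h0)
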